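/- In the extremal setup (r ≥ 1, n ≥ 8(r²+r+4), G* extremal, A = N(u*), B = V(G*) \ ({u*} ∪ A)): if the induced subgraph G*[A] has matching number at least 2, then ρ(G*)² ≤ ⌊(n−1)²/4⌋ (which contradicts the extremality of G*); consequently, assuming ν(G*[A]) ≥ 2 leads to (|A|−1)(|B|+1) ≥ ρ(G*)². -/

import Mathlib

open Finset Matrix

noncomputable section

/-- The book graph `B_{r+1}`: `r+1` triangles sharing a common edge, i.e. the join of an
edge (vertices `0, 1`) with an independent set of `r+1` vertices. -/
def bookGraph (r : ℕ) : SimpleGraph (Fin (r + 3)) :=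
  SimpleGraph.fromRel (fun u _ => u.val < 2)

/-- `Free H G` means `G` contains no subgraph isomorphic to `H`, i.e. there is no injective
graph homomorphism from `H` to `G`. -/
def Free {W V : Type*} (H : SimpleGraph W) (G : SimpleGraph V) : Prop :=
  ¬ ∃ f : H →g G, Function.Injective f

/-- The adjacency matrix of `G` over `ℝ` (with classical decidability of adjacency). -/
def adjMat {V : Type*} (G : SimpleGraph V) : Matrix V V ℝ :=
  letI : DecidableRel G.Adj := Classical.decRel _
  G.adjMatrix ℝ

/-- The spectral radius of a finite simple graph: the largest real eigenvalue of its
adjacency matrix. -/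
def specRad {V : Type*} [Fintype V] (G : SimpleGraph V) : ℝ :=
  sSup {t : ℝ | ∃ v : V → ℝ, v ≠ 0 ∧ adjMat G *ᵥ v = t • v}

/-- `Kstrr s t r` is the graph `K_{s,t}^{r,r}`: the complete bipartite graph with parts
`Fin s` and `Fin t`, together with one extra vertex (`none`) joined to exactly the first
`r` vertices of each part. -/
def Kstrr (s t r : ℕ) : SimpleGraph (Option (Fin s ⊕ Fin t)) :=
  SimpleGraph.fromRel (fun u v =>
    (∃ a b, u = some (Sum.inl a) ∧ v = some (Sum.inr b)) ∨
    (∃ a : Fin s, u = none ∧ v = some (Sum.inl a) ∧ a.val < r) ∨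
    (∃ b : Fin t, u = none ∧ v = some (Sum.inr b) ∧ b.val < r))

/-- `degIn G S v` is the number of neighbours of `v` in the set `S`. -/
def degIn {V : Type*} (G : SimpleGraph V) (S : Finset V) (v : V) : ℕ :=
  letI : DecidableRel G.Adj := Classical.decRel _
  (S.filter fun w => G.Adj v w).card

/-- `edgesIn G S` is the number of edges of `G` with both endpoints in `S`. -/
def edgesIn {V : Type*} [Fintype V] (G : SimpleGraph V) (S : Finset V) : ℕ :=
  letI := Classical.decEq V
  letI : DecidableRel G.Adj := Classical.decRel _
  letI : DecidablePred fun e : Sym2 V => ∀ v ∈ e, v ∈ S := Classical.decPred _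
  (G.edgeFinset.filter fun e => ∀ v ∈ e, v ∈ S).card

/-- `edgeCount G` is the number of edges of `G`. -/
def edgeCount {V : Type*} [Fintype V] (G : SimpleGraph V) : ℕ :=
  letI := Classical.decEq V
  letI : DecidableRel G.Adj := Classical.decRel _
  G.edgeFinset.card

/-- `edgesBetween G S T` is the number of pairs `(s, t) ∈ S × T` with `s` adjacent to `t`;
for disjoint `S` and `T` this is the number of edges between `S` and `T`. -/
def edgesBetween {V : Type*} (G : SimpleGraph V) (S T : Finset V) : ℕ :=
  letI : DecidableRel G.Adj := Classical.decRel _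
  ((S ×ˢ T).filter fun p => G.Adj p.1 p.2).card

/-- `maxDeg G` is the maximum degree of `G`. -/
def maxDeg {V : Type*} [Fintype V] (G : SimpleGraph V) : ℕ :=
  letI : DecidableRel G.Adj := Classical.decRel _
  G.maxDegree

/-- `matchingNumberOn G S` is the matching number of the subgraph of `G` induced by `S`:
the largest cardinality of a set of pairwise disjoint edges of `G` lying inside `S`. -/
def matchingNumberOn {V : Type*} (G : SimpleGraph V) (S : Finset V) : ℕ :=
  sSup {k | ∃ M : Finset (Sym2 V), ↑M ⊆ G.edgeSet ∧ (∀ e ∈ M, ∀ v ∈ e, v ∈ S) ∧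
    M.card = k ∧ (M : Set (Sym2 V)).Pairwise fun e f => ∀ v, v ∈ e → v ∉ f}

/-- `matchingNumber G` is the matching number of `G`. -/
def matchingNumber {V : Type*} [Fintype V] (G : SimpleGraph V) : ℕ :=
  matchingNumberOn G Finset.univ

end

section auxlemmas

lemma eigen_le_card {V : Type*} [Fintype V] (G : SimpleGraph V) {t : ℝ} {v : V → ℝ}
    (hv : v ≠ 0) (h : adjMat G *ᵥ v = t • v) : t ≤ (Fintype.card V : ℝ) := by
  classical
  letI : DecidableRel G.Adj := Classical.decRel _
  have hadj : adjMat G = G.adjMatrix ℝ := rfl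
  have hVne : Nonempty V := by
    by_contra hne
    exact hv (funext fun a => absurd ⟨a⟩ hne)
  obtain ⟨i, -, hi⟩ := Finset.exists_max_image Finset.univ (fun j => |v j|) ⟨Classical.arbitrary V, Finset.mem_univ _⟩
  have hipos : 0 < |v i| := by
    have : ∃ j, v j ≠ 0 := by
      by_contra hc
      push_neg at hc
      exact hv (funext hc)
    obtain ⟨j, hj⟩ := this
    exact lt_of_lt_of_le (abs_pos.mpr hj) (hi j (Finset.mem_univ j))
  have hrow : (adjMat G *ᵥ v) i = ∑ w ∈ G.neighborFinset i, v w := by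
    rw [hadj, SimpleGraph.adjMatrix_mulVec_apply]
  have ht : t * v i = ∑ w ∈ G.neighborFinset i, v w := by
    have := congrFun h i
    rw [hrow] at this
    rw [this, Pi.smul_apply, smul_eq_mul]
  have habs : |t| * |v i| ≤ (Fintype.card V : ℝ) * |v i| := by
    calc |t| * |v i| = |∑ w ∈ G.neighborFinset i, v w| := by rw [← abs_mul, ht]
    _ ≤ ∑ w ∈ G.neighborFinset i, |v w| := Finset.abs_sum_le_sum_abs _ _
    _ ≤ ∑ _w ∈ G.neighborFinset i, |v i| := Finset.sum_le_sum fun w _ => hi w (Finset.mem_univ w)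
    _ = (G.neighborFinset i).card * |v i| := by rw [Finset.sum_const, nsmul_eq_mul]
    _ ≤ (Fintype.card V : ℝ) * |v i| := by
        have := Finset.card_le_univ (G.neighborFinset i)
        have : ((G.neighborFinset i).card : ℝ) ≤ (Fintype.card V : ℝ) := by
          exact_mod_cast le_trans this (le_of_eq (Finset.card_univ))
        exact mul_le_mul_of_nonneg_right this (abs_nonneg _)
  have := le_of_mul_le_mul_right habs hipos
  exact le_trans (le_abs_self t) this

lemma le_specRad {V : Type*} [Fintype V] (G : SimpleGraph V) {t : ℝ} {v : V → ℝ}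
    (hv : v ≠ 0) (h : adjMat G *ᵥ v = t • v) : t ≤ specRad G := by
  apply le_csSup
  · exact ⟨(Fintype.card V : ℝ), fun s hs => by
      obtain ⟨w, hw0, hw⟩ := hs
      exact eigen_le_card G hw0 hw⟩
  · exact ⟨v, hv, h⟩

end auxlemmas

section cn

lemma commonNbrs_le {N r : ℕ} (G : SimpleGraph (Fin N)) [DecidableRel G.Adj]
    (hfree : Free (bookGraph r) G) {p q : Fin N} (hpq : G.Adj p q) :
    (Finset.univ.filter fun z => G.Adj p z ∧ G.Adj q z).card ≤ r := by
  classical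
  by_contra hc
  push_neg at hc
  obtain ⟨c, hcsub, hccard⟩ := Finset.exists_subset_card_eq hc
  set oi := c.orderIsoOfFin hccard with hoi
  have hmemc : ∀ k : Fin (r + 1), (oi k : Fin N) ∈ c := fun k => (oi k).2
  have hadjc : ∀ z ∈ c, G.Adj p z ∧ G.Adj q z := fun z hz =>
    (Finset.mem_filter.mp (hcsub hz)).2
  have hpc : ∀ z ∈ c, z ≠ p ∧ z ≠ q := by
    intro z hz
    obtain ⟨h1, h2⟩ := hadjc z hz
    exact ⟨fun h => G.irrefl (h ▸ h1), fun h => G.irrefl (h ▸ h2)⟩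
  -- the embedding
  let f : Fin (r + 3) → Fin N := fun k =>
    if k.val = 0 then p else if k.val = 1 then q
    else (oi ⟨k.val - 2, by omega⟩ : Fin N)
  have hf0 : f ⟨0, by omega⟩ = p := rfl
  have hinj : Function.Injective f := by
    intro a b hab
    simp only [f] at hab
    split_ifs at hab with h1 h2 h3 h4 h5 h6 h7 h8
    · exact Fin.ext (by omega)
    · exact absurd hab hpq.ne
    · exact absurd hab.symm (hpc _ (hmemc _)).1
    · exact absurd hab.symm hpq.ne
    · exact Fin.ext (by omega)
    · exact absurd hab.symm (hpc _ (hmemc _)).2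
    · exact absurd hab (hpc _ (hmemc _)).1
    · exact absurd hab (hpc _ (hmemc _)).2
    · have h2 : a.val - 2 = b.val - 2 := Fin.mk.inj_iff.mp (oi.injective (Subtype.ext hab))
      exact Fin.ext (by omega)
  have hhom : ∀ a b : Fin (r + 3), (bookGraph r).Adj a b → G.Adj (f a) (f b) := by
    intro a b hab
    have hab' : a ≠ b ∧ (a.val < 2 ∨ b.val < 2) := by
      simpa [bookGraph, SimpleGraph.fromRel_adj] using hab
    obtain ⟨hne, hor⟩ := hab'
    have hnev : a.val ≠ b.val := fun h => hne (Fin.ext h)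
    simp only [f]
    split_ifs with h1 h2 h3 h4 h5 h6 h7 h8 h9
    all_goals try omega
    · exact (hadjc _ (hmemc _)).1
    · exact hpq.symm
    · exact (hadjc _ (hmemc _)).2
    · exact ((hadjc _ (hmemc _)).1).symm
    · exact ((hadjc _ (hmemc _)).2).symm
  exact hfree ⟨⟨f, fun hab => hhom _ _ hab⟩, hinj⟩

end cn

section witness

lemma card_filter_Ico (n a b : ℕ) (hbn : b ≤ n) :
    (Finset.univ.filter fun j : Fin n => a ≤ j.val ∧ j.val < b).card = b - a := by
  classical
  have h : (Finset.univ.filter fun j : Fin n => a ≤ j.val ∧ j.val < b)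
      = (Finset.Ico a b).attachFin (fun m hm => lt_of_lt_of_le (Finset.mem_Ico.mp hm).2 hbn) := by
    ext j
    simp [Finset.mem_attachFin, Finset.mem_Ico]
  rw [h, Finset.card_attachFin, Nat.card_Ico]

set_option maxHeartbeats 1000000 in
lemma witness_exists (r n : ℕ) (hr : 1 ≤ r) (hn : 48 ≤ n) :
    ∃ H : SimpleGraph (Fin n), ¬ H.Colorable 2 ∧ Free (bookGraph r) H ∧
      ((n : ℝ) - 3) ^ 2 - 1 ≤ 4 * specRad H ^ 2 ∧ 0 ≤ specRad H := by
  classical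
  set s : ℕ := (n - 3) / 2 with hs
  set t : ℕ := n - 3 - s with ht
  have hst : s + t = n - 3 := by omega
  have hs1 : 1 ≤ s := by omega
  have ht1 : 1 ≤ t := by omega
  have hsn : s ≤ n - 3 := by omega
  set H : SimpleGraph (Fin n) := SimpleGraph.fromRel (fun u v =>
    (u.val < s ∧ s ≤ v.val ∧ v.val < n - 3) ∨ (n - 3 ≤ u.val ∧ n - 3 ≤ v.val)) with hH
  letI : DecidableRel H.Adj := Classical.decRel _
  have hHadj : ∀ u v : Fin n, H.Adj u v ↔ u.val ≠ v.val ∧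
      ((u.val < s ∧ s ≤ v.val ∧ v.val < n - 3) ∨ (n - 3 ≤ u.val ∧ n - 3 ≤ v.val) ∨
       (v.val < s ∧ s ≤ u.val ∧ u.val < n - 3)) := by
    intro u v
    rw [hH, SimpleGraph.fromRel_adj]
    constructor
    · rintro ⟨hne, h⟩
      refine ⟨fun h' => hne (Fin.ext h'), ?_⟩
      tauto
    · rintro ⟨hne, h⟩
      refine ⟨fun h' => hne (congrArg Fin.val h'), ?_⟩
      tauto
  -- non-bipartite
  have hnb : ¬ H.Colorable 2 := by
    rintro ⟨C⟩
    have w1 : Fin n := ⟨n - 3, by omega⟩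
    set v1 : Fin n := ⟨n - 3, by omega⟩
    set v2 : Fin n := ⟨n - 2, by omega⟩
    set v3 : Fin n := ⟨n - 1, by omega⟩
    have h12 : H.Adj v1 v2 := (hHadj v1 v2).mpr (by simp [v1, v2]; omega)
    have h13 : H.Adj v1 v3 := (hHadj v1 v3).mpr (by simp [v1, v3]; omega)
    have h23 : H.Adj v2 v3 := (hHadj v2 v3).mpr (by simp [v2, v3]; omega)
    have c12 : C v1 ≠ C v2 := C.valid h12
    have c13 : C v1 ≠ C v3 := C.valid h13
    have c23 : C v2 ≠ C v3 := C.valid h23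
    have e12 : (C v1).val ≠ (C v2).val := fun h => c12 (Fin.ext h)
    have e13 : (C v1).val ≠ (C v3).val := fun h => c13 (Fin.ext h)
    have e23 : (C v2).val ≠ (C v3).val := fun h => c23 (Fin.ext h)
    have := (C v1).isLt
    have := (C v2).isLt
    have := (C v3).isLt
    omega
  -- book-free
  have hbf : Free (bookGraph r) H := by
    rintro ⟨f, finj⟩
    have hbadj : ∀ a b : Fin (r + 3), a.val ≠ b.val → (a.val < 2 ∨ b.val < 2) →
        (bookGraph r).Adj a b := by
      intro a b hne hlt
      rw [bookGraph, SimpleGraph.fromRel_adj]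
      exact ⟨fun h => hne (congrArg Fin.val h), by tauto⟩
    have htri : ∀ a b c : Fin n, H.Adj a b → H.Adj a c → H.Adj b c →
        n - 3 ≤ a.val ∧ n - 3 ≤ b.val ∧ n - 3 ≤ c.val := by
      intro a b c hab hac hbc
      rw [hHadj] at hab hac hbc
      omega
    set k0 : Fin (r + 3) := ⟨0, by omega⟩
    set k1 : Fin (r + 3) := ⟨1, by omega⟩
    set k2 : Fin (r + 3) := ⟨2, by omega⟩
    set k3 : Fin (r + 3) := ⟨3, by omega⟩
    have h01 : H.Adj (f k0) (f k1) := f.map_adj (hbadj k0 k1 (by simp [k0, k1]) (by simp [k0]))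
    have h02 : H.Adj (f k0) (f k2) := f.map_adj (hbadj k0 k2 (by simp [k0, k2]) (by simp [k0]))
    have h12 : H.Adj (f k1) (f k2) := f.map_adj (hbadj k1 k2 (by simp [k1, k2]) (by simp [k1]))
    have h03 : H.Adj (f k0) (f k3) := f.map_adj (hbadj k0 k3 (by simp [k0, k3]) (by simp [k0]))
    have h13 : H.Adj (f k1) (f k3) := f.map_adj (hbadj k1 k3 (by simp [k1, k3]) (by simp [k1]))
    have t1 := htri _ _ _ h01 h02 h12
    have t2 := htri _ _ _ h01 h03 h13
    have d01 : (f k0).val ≠ (f k1).val := fun h => by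
      have := finj (Fin.ext h : f k0 = f k1); simp [k0, k1, Fin.ext_iff] at this
    have d02 : (f k0).val ≠ (f k2).val := fun h => by
      have := finj (Fin.ext h : f k0 = f k2); simp [k0, k2, Fin.ext_iff] at this
    have d03 : (f k0).val ≠ (f k3).val := fun h => by
      have := finj (Fin.ext h : f k0 = f k3); simp [k0, k3, Fin.ext_iff] at this
    have d12 : (f k1).val ≠ (f k2).val := fun h => by
      have := finj (Fin.ext h : f k1 = f k2); simp [k1, k2, Fin.ext_iff] at this
    have d13 : (f k1).val ≠ (f k3).val := fun h => by
      have := finj (Fin.ext h : f k1 = f k3); simp [k1, k3, Fin.ext_iff] at this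
    have d23 : (f k2).val ≠ (f k3).val := fun h => by
      have := finj (Fin.ext h : f k2 = f k3); simp [k2, k3, Fin.ext_iff] at this
    have l0 := (f k0).isLt
    have l1 := (f k1).isLt
    have l2 := (f k2).isLt
    have l3 := (f k3).isLt
    omega
  -- eigenvector
  set v : Fin n → ℝ := fun j => if j.val < s then Real.sqrt t else
    if j.val < n - 3 then Real.sqrt s else 0 with hv
  have hsqt_pos : (0:ℝ) < Real.sqrt t := Real.sqrt_pos.mpr (by exact_mod_cast ht1)
  have hsqs_pos : (0:ℝ) < Real.sqrt s := Real.sqrt_pos.mpr (by exact_mod_cast hs1)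
  have hv0 : v ≠ 0 := by
    intro hz
    have h0 : v ⟨0, by omega⟩ = 0 := congrFun hz _
    rw [hv] at h0
    simp only [hs1, if_pos] at h0
    have : (⟨0, by omega⟩ : Fin n).val < s := by show 0 < s; omega
    rw [if_pos this] at h0
    exact hsqt_pos.ne' h0
  have heigH : adjMat H *ᵥ v = Real.sqrt (s * t) • v := by
    have hadjm : adjMat H = H.adjMatrix ℝ := rfl
    funext i
    rw [hadjm, SimpleGraph.adjMatrix_mulVec_apply, Pi.smul_apply, smul_eq_mul]
    rcases lt_or_ge i.val s with hi | hi
    · -- i in left part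
      have hnb : H.neighborFinset i = Finset.univ.filter fun j : Fin n => s ≤ j.val ∧ j.val < n - 3 := by
        ext j
        rw [SimpleGraph.mem_neighborFinset, hHadj, Finset.mem_filter]
        constructor
        · rintro ⟨hne, h⟩; simp only [Finset.mem_univ, true_and]; omega
        · rintro ⟨-, h⟩; exact ⟨by omega, by omega⟩
      rw [hnb]
      have hval : ∀ j ∈ Finset.univ.filter fun j : Fin n => s ≤ j.val ∧ j.val < n - 3,
          v j = Real.sqrt s := by
        intro j hj
        obtain ⟨-, hj1, hj2⟩ := Finset.mem_filter.mp hj |>.imp id id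
        rw [hv]
        simp only
        rw [if_neg (by omega), if_pos (by omega)]
      rw [Finset.sum_congr rfl hval, Finset.sum_const, card_filter_Ico n s (n-3) (by omega),
        nsmul_eq_mul]
      have hvi : v i = Real.sqrt t := by rw [hv]; simp only; rw [if_pos hi]
      rw [hvi]
      rw [← ht, Real.sqrt_mul (by positivity), mul_assoc,
        Real.mul_self_sqrt (by positivity)]
      ring
    · rcases lt_or_ge i.val (n - 3) with hi2 | hi2
      · -- i in right part
        have hnb : H.neighborFinset i = Finset.univ.filter fun j : Fin n => 0 ≤ j.val ∧ j.val < s := by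
          ext j
          rw [SimpleGraph.mem_neighborFinset, hHadj, Finset.mem_filter]
          constructor
          · rintro ⟨hne, h⟩; simp only [Finset.mem_univ, true_and]; omega
          · rintro ⟨-, h⟩; exact ⟨by omega, by omega⟩
        rw [hnb]
        have hval : ∀ j ∈ Finset.univ.filter fun j : Fin n => 0 ≤ j.val ∧ j.val < s,
            v j = Real.sqrt t := by
          intro j hj
          have hj' := (Finset.mem_filter.mp hj).2
          rw [hv]
          simp only
          rw [if_pos (by omega)]
        rw [Finset.sum_congr rfl hval, Finset.sum_const, card_filter_Ico n 0 s (by omega),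
          nsmul_eq_mul]
        have hvi : v i = Real.sqrt s := by rw [hv]; simp only; rw [if_neg (by omega), if_pos hi2]
        rw [hvi]
        rw [Nat.sub_zero, Real.sqrt_mul (by positivity), mul_comm (Real.sqrt (s:ℝ)) (Real.sqrt (t:ℝ)),
          mul_assoc, Real.mul_self_sqrt (by positivity)]
        ring
      · -- i in triangle
        have hz : ∀ j ∈ H.neighborFinset i, v j = 0 := by
          intro j hj
          have hadj := (SimpleGraph.mem_neighborFinset _ _ _).mp hj
          rw [hHadj] at hadj
          have : n - 3 ≤ j.val := by omega
          rw [hv]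
          simp only
          rw [if_neg (by omega), if_neg (by omega)]
        rw [Finset.sum_eq_zero hz]
        have hvi : v i = 0 := by rw [hv]; simp only; rw [if_neg (by omega), if_neg (by omega)]
        rw [hvi, mul_zero]
  have hle : Real.sqrt (s * t) ≤ specRad H := le_specRad H hv0 heigH
  have hsq : Real.sqrt (s * t) ^ 2 = (s * t : ℕ) := by
    rw [sq, Real.mul_self_sqrt (by positivity)]
    push_cast
    ring
  have hst4 : ((n : ℝ) - 3) ^ 2 - 1 ≤ 4 * ((s * t : ℕ) : ℝ) := by
    have hnat : (n - 3) ^ 2 ≤ 4 * (s * t) + 1 := by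
      have h2 : n - 3 = 2 * s ∨ n - 3 = 2 * s + 1 := by omega
      rcases h2 with h2 | h2 <;> nlinarith [hst]
    have hc : ((n : ℝ) - 3) = ((n - 3 : ℕ) : ℝ) := by
      have : (3:ℕ) ≤ n := by omega
      push_cast [this]
      ring
    rw [hc]
    have := (Nat.cast_le (α := ℝ)).mpr hnat
    push_cast at this ⊢
    nlinarith [this]
  refine ⟨H, hnb, hbf, ?_, le_trans (Real.sqrt_nonneg _) hle⟩
  have h1 : (s * t : ℕ) ≤ specRad H ^ 2 := by
    rw [← hsq]
    have h0 : 0 ≤ Real.sqrt (s * t) := Real.sqrt_nonneg _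
    nlinarith [hle, h0]
  nlinarith [hst4, h1]

end witness

section swaps

lemma sum_card_filter_comm {n : ℕ} (G : SimpleGraph (Fin n)) [DecidableRel G.Adj]
    (S T : Finset (Fin n)) :
    ∑ v ∈ S, (T.filter fun w => G.Adj v w).card = ∑ w ∈ T, (S.filter fun v => G.Adj w v).card := by
  have h1 : ∑ v ∈ S, (T.filter fun w => G.Adj v w).card
      = ∑ v ∈ S, ∑ w ∈ T, if G.Adj v w then 1 else 0 :=
    Finset.sum_congr rfl fun v _ => Finset.card_filter _ _
  have h2 : ∑ w ∈ T, (S.filter fun v => G.Adj w v).card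
      = ∑ w ∈ T, ∑ v ∈ S, if G.Adj w v then 1 else 0 :=
    Finset.sum_congr rfl fun w _ => Finset.card_filter _ _
  rw [h1, h2, Finset.sum_comm]
  apply Finset.sum_congr rfl
  intro w _
  apply Finset.sum_congr rfl
  intro v _
  congr 1
  simp [G.adj_comm]

end swaps

section numeric

lemma numCase1a (a b N R F ρ : ℝ) (h1 : ρ^2 ≤ a + a*b + 2*(5*R - 1 - b))
    (hab : a + b = N) (hb : 10*R - 1 ≤ b) (hR : 1 ≤ R) (hN : 8*R^2 + 8*R + 31 ≤ N)
    (hF : N^2 ≤ 4*F + 3) : ρ^2 ≤ F := by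
  nlinarith [sq_nonneg (2*a - N - 3), sq_nonneg (R-1)]

lemma numCase1b (a b R ρ : ℝ) (h1 : ρ^2 ≤ a + a*b + 2*(5*R - 1 - b)) (hb : 10*R - 1 ≤ b) :
    ρ^2 ≤ (a-1)*(b+1) := by nlinarith

lemma numCase2a (a b N R ρ : ℝ) (h1 : ρ^2 ≤ a + a*b + 2*(5*R - 1 - b))
    (hab : a + b = N) (hb1 : 5*R - 1 ≤ b) (hb2 : b ≤ 10*R - 1) (hR : 1 ≤ R)
    (hN : 8*R^2 + 8*R + 31 ≤ N) (hlow : (N-2)^2 - 1 ≤ 4*ρ^2) : False := by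
  have hy : 0 ≤ N - 20*R + 2 := by nlinarith [sq_nonneg (2*R - 4)]
  have hA1 : (N - 20*R + 2)*(N - 20*R + 2) ≤ (N - 2*b)*(N - 2*b) :=
    mul_self_le_mul_self hy (by linarith)
  have h12 : 12*R ≤ N - 20*R - 2 := by nlinarith [sq_nonneg (2*R - 3)]
  have hA2 : (12*R)*(12*R) ≤ (N - 20*R - 2)*(N - 20*R - 2) :=
    mul_self_le_mul_self (by linarith) h12
  nlinarith [hA1, hA2, sq_nonneg (R-1)]

lemma numCase2b (N R ρ : ℝ) (h1 : ρ^2 ≤ N*(5*R)) (hR : 1 ≤ R)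
    (hN : 8*R^2 + 8*R + 31 ≤ N) (hlow : (N-2)^2 - 1 ≤ 4*ρ^2) : False := by
  have h12 : 12*R ≤ N - 20*R - 4 := by nlinarith [sq_nonneg (2*R - 3)]
  have hprod : (12*R)*N ≤ (N - 20*R - 4)*N :=
    mul_le_mul_of_nonneg_right h12 (by nlinarith [sq_nonneg R])
  nlinarith [hprod, sq_nonneg R, mul_pos (lt_of_lt_of_le zero_lt_one hR)
    (lt_of_lt_of_le (by norm_num : (0:ℝ) < 31) (by nlinarith [sq_nonneg R] : (31:ℝ) ≤ N))]

lemma endgame (aa bb mm R N F ρ : ℝ)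
    (hmain : ρ^2 ≤ aa + aa*bb + mm*(5*R - 1 - bb))
    (hab : aa + bb = N) (hm2 : 2 ≤ mm) (h2m : 2*mm ≤ aa) (hR : 1 ≤ R)
    (hN : 8*R^2 + 8*R + 31 ≤ N) (hF : N^2 ≤ 4*F + 3)
    (hlow : (N-2)^2 - 1 ≤ 4*ρ^2) (hbb0 : 0 ≤ bb) :
    ρ^2 ≤ F ∧ ρ^2 ≤ (aa-1)*(bb+1) := by
  rcases le_or_gt (10*R - 1) bb with hb | hb
  · have hcoeff : 5*R - 1 - bb ≤ 0 := by linarith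
    have hm5 : mm * (5*R - 1 - bb) ≤ 2 * (5*R - 1 - bb) :=
      mul_le_mul_of_nonpos_right hm2 hcoeff
    have h1 : ρ^2 ≤ aa + aa*bb + 2*(5*R - 1 - bb) := by linarith
    exact ⟨numCase1a aa bb N R F ρ h1 hab hb hR hN hF, numCase1b aa bb R ρ h1 hb⟩
  · exfalso
    rcases le_or_gt (5*R - 1) bb with hb5 | hb5
    · have hcoeff : 5*R - 1 - bb ≤ 0 := by linarith
      have hm5 : mm * (5*R - 1 - bb) ≤ 2 * (5*R - 1 - bb) :=
        mul_le_mul_of_nonpos_right hm2 hcoeff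
      exact numCase2a aa bb N R ρ (by linarith) hab hb5 (by linarith) hR hN hlow
    · have hcoeff : (0:ℝ) ≤ 5*R - 1 - bb := by linarith
      have hm5 : mm * (5*R - 1 - bb) ≤ (aa/2) * (5*R - 1 - bb) :=
        mul_le_mul_of_nonneg_right (by linarith) hcoeff
      have haan : aa ≤ N := by linarith
      have hfac : 1 + (bb + 5*R - 1)/2 ≤ 5*R := by linarith
      have hfac0 : (0:ℝ) ≤ 1 + (bb + 5*R - 1)/2 := by linarith
      have hN0 : (0:ℝ) ≤ N := by nlinarith [sq_nonneg R]
      have hmm := mul_le_mul haan hfac hfac0 hN0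
      exact numCase2b N R ρ (by nlinarith [hmm]) hR hN hlow


end numeric


/-- In the extremal setup, if `ν(G*[A]) ≥ 2` then `ρ(G*)² ≤ ⌊(n−1)²/4⌋` and consequently
`ρ(G*)² ≤ (|A|−1)(|B|+1)`. -/
theorem matching_A_ge_two_contradiction (r n : ℕ) (hr : 1 ≤ r) (hn : 8 * (r ^ 2 + r + 4) ≤ n)
    (G : SimpleGraph (Fin n)) (hconn : G.Connected) (hnonbip : ¬ G.Colorable 2)
    (hfree : Free (bookGraph r) G)
    (hmax : ∀ H : SimpleGraph (Fin n), ¬ H.Colorable 2 → Free (bookGraph r) H →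
      specRad H ≤ specRad G)
    (x : Fin n → ℝ) (hxpos : ∀ v, 0 < x v) (hxunit : ∑ v, x v ^ 2 = 1)
    (heig : adjMat G *ᵥ x = specRad G • x)
    (u : Fin n) (hu : ∀ v, x v ≤ x u)
    (A B : Finset (Fin n)) (hA : ∀ v, v ∈ A ↔ G.Adj u v)
    (hB : ∀ v, v ∈ B ↔ v ≠ u ∧ v ∉ A)
    (hν : 2 ≤ matchingNumberOn G A) :
    specRad G ^ 2 ≤ (((n - 1) ^ 2 / 4 : ℕ) : ℝ) ∧
      specRad G ^ 2 ≤ ((A.card : ℝ) - 1) * ((B.card : ℝ) + 1) := by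
  classical
  letI instAdj : DecidableRel G.Adj := Classical.decRel _
  have hadjm : adjMat G = G.adjMatrix ℝ := rfl
  set ρ := specRad G with hρdef
  have hr2 : 1 ≤ r^2 := Nat.one_le_pow _ _ (by omega)
  have hn48 : 48 ≤ n := by nlinarith
  -- partition facts
  have huA : u ∉ A := fun h => G.irrefl ((hA u).mp h)
  have huB : u ∉ B := fun h => ((hB u).mp h).1 rfl
  have hdisjAB : Disjoint A B := Finset.disjoint_left.mpr fun {v} hvA hvB => ((hB v).mp hvB).2 hvA
  have hcardn : A.card + B.card + 1 = n := by
    have huniv : insert u (A ∪ B) = Finset.univ := by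
      apply Finset.eq_univ_of_forall
      intro v
      by_cases hvu : v = u
      · simp [hvu]
      by_cases hvA : v ∈ A
      · simp [hvA]
      · have : v ∈ B := (hB v).mpr ⟨hvu, hvA⟩
        simp [this]
    have hcard : (insert u (A ∪ B)).card = n := by
      rw [huniv, Finset.card_univ, Fintype.card_fin]
    rw [Finset.card_insert_of_notMem (by simp [huA, huB]),
      Finset.card_union_of_disjoint hdisjAB] at hcard
    omega
  -- Step 1 : rho^2 <= sum of degrees over A
  have hNu : G.neighborFinset u = A := by
    ext v
    rw [SimpleGraph.mem_neighborFinset]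
    exact (hA v).symm
  have hx2 : adjMat G *ᵥ (adjMat G *ᵥ x) = (ρ^2) • x := by
    rw [heig, Matrix.mulVec_smul, heig, smul_smul, ← sq]
  have hρ2u : ρ^2 * x u = ∑ v ∈ A, ∑ w ∈ G.neighborFinset v, x w := by
    have h1 := congrFun hx2 u
    rw [Pi.smul_apply, smul_eq_mul] at h1
    rw [← h1, hadjm, SimpleGraph.adjMatrix_mulVec_apply, hNu]
    apply Finset.sum_congr rfl
    intro v _
    rw [SimpleGraph.adjMatrix_mulVec_apply]
  have hS1 : ρ^2 ≤ ((∑ v ∈ A, G.degree v : ℕ) : ℝ) := by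
    have hle : ρ^2 * x u ≤ ((∑ v ∈ A, G.degree v : ℕ) : ℝ) * x u := by
      rw [hρ2u, Nat.cast_sum, Finset.sum_mul]
      apply Finset.sum_le_sum
      intro v _
      calc ∑ w ∈ G.neighborFinset v, x w ≤ ∑ _w ∈ G.neighborFinset v, x u :=
            Finset.sum_le_sum fun w _ => hu w
        _ = ((G.neighborFinset v).card : ℝ) * x u := by rw [Finset.sum_const, nsmul_eq_mul]
        _ = (G.degree v : ℝ) * x u := rfl
    exact le_of_mul_le_mul_right hle (hxpos u)
  -- Step 2 : degree decomposition
  set dA : Fin n → ℕ := fun z => (A.filter fun w => G.Adj z w).card with hdA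
  set dB : Fin n → ℕ := fun z => (B.filter fun w => G.Adj z w).card with hdB
  have hS2 : (∑ v ∈ A, G.degree v) ≤ A.card + (∑ v ∈ A, dA v) + (∑ v ∈ A, dB v) := by
    have hdeg : ∀ v ∈ A, G.degree v ≤ 1 + dA v + dB v := by
      intro v _
      show G.degree v ≤ 1 + (A.filter fun w => G.Adj v w).card + (B.filter fun w => G.Adj v w).card
      have hsub : G.neighborFinset v ⊆
          insert u ((A.filter fun w => G.Adj v w) ∪ (B.filter fun w => G.Adj v w)) := by
        intro w hw
        have hadj : G.Adj v w := (SimpleGraph.mem_neighborFinset _ _ _).mp hw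
        by_cases hwu : w = u
        · simp [hwu]
        by_cases hwA : w ∈ A
        · exact Finset.mem_insert_of_mem
            (Finset.mem_union_left _ (Finset.mem_filter.mpr ⟨hwA, hadj⟩))
        · have hwB : w ∈ B := (hB w).mpr ⟨hwu, hwA⟩
          exact Finset.mem_insert_of_mem
            (Finset.mem_union_right _ (Finset.mem_filter.mpr ⟨hwB, hadj⟩))
      have h1 : G.degree v ≤ (insert u ((A.filter fun w => G.Adj v w) ∪
          (B.filter fun w => G.Adj v w))).card := Finset.card_le_card hsub
      have h2 := Finset.card_insert_le u ((A.filter fun w => G.Adj v w) ∪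
          (B.filter fun w => G.Adj v w))
      have h3 := Finset.card_union_le (A.filter fun w => G.Adj v w)
          (B.filter fun w => G.Adj v w)
      omega
    calc ∑ v ∈ A, G.degree v ≤ ∑ v ∈ A, (1 + dA v + dB v) := Finset.sum_le_sum hdeg
      _ = A.card + (∑ v ∈ A, dA v) + (∑ v ∈ A, dB v) := by
          rw [Finset.sum_add_distrib, Finset.sum_add_distrib, Finset.sum_const, smul_eq_mul,
            mul_one]
  -- Step 3 : maximum matching inside A
  have hmatch : matchingNumberOn G A = sSup {k | ∃ M : Finset (Sym2 (Fin n)),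
      ↑M ⊆ G.edgeSet ∧ (∀ e ∈ M, ∀ v ∈ e, v ∈ A) ∧
      M.card = k ∧ (M : Set (Sym2 (Fin n))).Pairwise fun e f => ∀ v, v ∈ e → v ∉ f} := rfl
  set K := {k | ∃ M : Finset (Sym2 (Fin n)), ↑M ⊆ G.edgeSet ∧ (∀ e ∈ M, ∀ v ∈ e, v ∈ A) ∧
      M.card = k ∧ (M : Set (Sym2 (Fin n))).Pairwise fun e f => ∀ v, v ∈ e → v ∉ f} with hK
  have hbdd : BddAbove K := by
    refine ⟨Fintype.card (Sym2 (Fin n)), ?_⟩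
    rintro k ⟨M, -, -, hcard, -⟩
    rw [← hcard]
    exact le_trans (Finset.card_le_univ M) (le_of_eq (Finset.card_univ))
  have hKne : K.Nonempty := ⟨0, ∅, by simp, by simp, rfl, by simp⟩
  obtain ⟨M, hMedge, hMA, hMcard, hMpair⟩ := Nat.sSup_mem hKne hbdd
  set m := sSup K with hm
  have hm2 : 2 ≤ m := hν
  -- endpoints of matching edges
  have hch : ∀ e : Sym2 (Fin n), ∃ ab : (Fin n) × (Fin n), e = s(ab.1, ab.2) := by
    intro e
    induction e with
    | _ a b => exact ⟨(a, b), rfl⟩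
  choose pq hpq using hch
  set p : Sym2 (Fin n) → Fin n := fun e => (pq e).1 with hp
  set q : Sym2 (Fin n) → Fin n := fun e => (pq e).2 with hq'
  have hpq' : ∀ e, e = s(p e, q e) := fun e => hpq e
  have hmemiff : ∀ e (z : Fin n), z ∈ e ↔ z = p e ∨ z = q e := by
    intro e z
    conv_lhs => rw [hpq' e]
    exact Sym2.mem_iff
  have hadjpq : ∀ e ∈ M, G.Adj (p e) (q e) := by
    intro e he
    have h1 : e ∈ G.edgeSet := hMedge (Finset.mem_coe.mpr he)
    rw [hpq' e] at h1
    exact (SimpleGraph.mem_edgeSet G).mp h1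
  have hpA : ∀ e ∈ M, p e ∈ A := fun e he =>
    hMA e he (p e) ((hmemiff e (p e)).mpr (Or.inl rfl))
  have hqA : ∀ e ∈ M, q e ∈ A := fun e he =>
    hMA e he (q e) ((hmemiff e (q e)).mpr (Or.inr rfl))
  have hdisjedges : ∀ e ∈ M, ∀ f ∈ M, e ≠ f → ∀ z, z ∈ e → z ∉ f := by
    intro e he f hf hne z
    exact hMpair (Finset.mem_coe.mpr he) (Finset.mem_coe.mpr hf) hne z
  set VM : Finset (Fin n) := M.image p ∪ M.image q with hVM
  have hVMA : VM ⊆ A := by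
    intro z hz
    rcases Finset.mem_union.mp hz with hz | hz
    · obtain ⟨e, he, rfl⟩ := Finset.mem_image.mp hz
      exact hpA e he
    · obtain ⟨e, he, rfl⟩ := Finset.mem_image.mp hz
      exact hqA e he
  have hVMmem : ∀ e ∈ M, ∀ z ∈ e, z ∈ VM := by
    intro e he z hz
    rcases (hmemiff e z).mp hz with rfl | rfl
    · exact Finset.mem_union_left _ (Finset.mem_image_of_mem p he)
    · exact Finset.mem_union_right _ (Finset.mem_image_of_mem q he)
  have hpinj : Set.InjOn p M := by
    intro e he f hf hpe
    by_contra hne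
    exact hdisjedges e he f hf hne (p e) ((hmemiff e (p e)).mpr (Or.inl rfl))
      (hpe ▸ (hmemiff f (p f)).mpr (Or.inl rfl))
  have hqinj : Set.InjOn q M := by
    intro e he f hf hpe
    by_contra hne
    exact hdisjedges e he f hf hne (q e) ((hmemiff e (q e)).mpr (Or.inr rfl))
      (hpe ▸ (hmemiff f (q f)).mpr (Or.inr rfl))
  have himdisj : Disjoint (M.image p) (M.image q) := by
    rw [Finset.disjoint_left]
    rintro z hz1 hz2
    obtain ⟨e, he, hze⟩ := Finset.mem_image.mp hz1
    obtain ⟨f, hf, hzf⟩ := Finset.mem_image.mp hz2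
    by_cases hef : e = f
    · subst hef
      rw [← hzf] at hze
      exact (G.ne_of_adj (hadjpq e he)) hze
    · exact hdisjedges e he f hf hef (p e) ((hmemiff e (p e)).mpr (Or.inl rfl))
        (by rw [hze, ← hzf]; exact (hmemiff f (q f)).mpr (Or.inr rfl))
  have hVMcard : VM.card = 2 * m := by
    rw [hVM, Finset.card_union_of_disjoint himdisj, Finset.card_image_of_injOn hpinj,
      Finset.card_image_of_injOn hqinj, hMcard]
    ring
  have h2ma : 2 * m ≤ A.card := by
    rw [← hVMcard]
    exact Finset.card_le_card hVMA
  have hma : m ≤ A.card := by omega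
  -- maximality of the matching
  have hmaxmatch : ∀ v ∈ A, ∀ w ∈ A, G.Adj v w → v ∈ VM ∨ w ∈ VM := by
    intro v hv w hw hadj
    by_contra hc
    push_neg at hc
    obtain ⟨hvn, hwn⟩ := hc
    have hnotin : s(v, w) ∉ M := fun hmem =>
      hvn (hVMmem _ hmem v (Sym2.mem_mk_left v w))
    have hsymmR : Symmetric (fun e f : Sym2 (Fin n) => ∀ z, z ∈ e → z ∉ f) := by
      intro e f h z hzf hze
      exact h z hze hzf
    have hmem1 : (m + 1) ∈ K := by
      refine ⟨insert s(v, w) M, ?_, ?_, ?_, ?_⟩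
      · rw [Finset.coe_insert]
        rw [Set.insert_subset_iff]
        exact ⟨(SimpleGraph.mem_edgeSet G).mpr hadj, hMedge⟩
      · intro e he z hz
        rcases Finset.mem_insert.mp he with rfl | he
        · rcases Sym2.mem_iff.mp hz with rfl | rfl
          · exact hv
          · exact hw
        · exact hMA e he z hz
      · rw [Finset.card_insert_of_notMem hnotin, hMcard]
      · rw [Finset.coe_insert]
        haveI : Std.Symm (fun e f : Sym2 (Fin n) => ∀ z, z ∈ e → z ∉ f) := ⟨fun a b h => hsymmR h⟩
        rw [Set.pairwise_insert_of_symm]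
        refine ⟨hMpair, ?_⟩
        intro e he _hne z hz
        intro hzin
        rcases Sym2.mem_iff.mp hz with rfl | rfl
        · exact hvn (hVMmem e (Finset.mem_coe.mp he) z hzin)
        · exact hwn (hVMmem e (Finset.mem_coe.mp he) z hzin)
    have := le_csSup hbdd hmem1
    omega
  -- Step 4 : degrees inside A are at most r
  have hdAr : ∀ v ∈ A, dA v ≤ r := by
    intro v hv
    have hsub : A.filter (fun w => G.Adj v w) ⊆
        Finset.univ.filter fun z => G.Adj u z ∧ G.Adj v z := by
      intro z hz
      obtain ⟨hz1, hz2⟩ := Finset.mem_filter.mp hz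
      exact Finset.mem_filter.mpr ⟨Finset.mem_univ z, (hA z).mp hz1, hz2⟩
    exact le_trans (Finset.card_le_card hsub) (commonNbrs_le G hfree ((hA v).mp hv))
  -- Step 5 : P <= 4 m r
  have hP : (∑ v ∈ A, dA v) ≤ 4 * (m * r) := by
    have hsplit := Finset.sum_filter_add_sum_filter_not A (fun v => v ∈ VM) dA
    have h1 : (∑ v ∈ A.filter (fun v => v ∈ VM), dA v) ≤ 2 * (m * r) := by
      calc (∑ v ∈ A.filter (fun v => v ∈ VM), dA v)
          ≤ ∑ _v ∈ A.filter (fun v => v ∈ VM), r := by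
            apply Finset.sum_le_sum
            intro v hv
            exact hdAr v (Finset.mem_of_mem_filter v hv)
        _ = (A.filter (fun v => v ∈ VM)).card * r := by
            rw [Finset.sum_const, smul_eq_mul]
        _ ≤ VM.card * r := by
            apply Nat.mul_le_mul_right
            apply Finset.card_le_card
            intro z hz
            exact (Finset.mem_filter.mp hz).2
        _ = 2 * (m * r) := by rw [hVMcard]; ring
    have h2 : (∑ v ∈ A.filter (fun v => ¬ v ∈ VM), dA v) ≤ 2 * (m * r) := by
      have hsub : ∀ v ∈ A.filter (fun v => ¬ v ∈ VM),
          dA v ≤ (VM.filter fun w => G.Adj v w).card := by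
        intro v hv
        obtain ⟨hvA, hvn⟩ := Finset.mem_filter.mp hv
        apply Finset.card_le_card
        intro w hw
        obtain ⟨hwA, hadj⟩ := Finset.mem_filter.mp hw
        rcases hmaxmatch v hvA w hwA hadj with h | h
        · exact absurd h hvn
        · exact Finset.mem_filter.mpr ⟨h, hadj⟩
      calc (∑ v ∈ A.filter (fun v => ¬ v ∈ VM), dA v)
          ≤ ∑ v ∈ A.filter (fun v => ¬ v ∈ VM), (VM.filter fun w => G.Adj v w).card :=
            Finset.sum_le_sum hsub
        _ ≤ ∑ v ∈ A, (VM.filter fun w => G.Adj v w).card := by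
            apply Finset.sum_le_sum_of_subset
            exact Finset.filter_subset _ _
        _ = ∑ w ∈ VM, (A.filter fun v => G.Adj w v).card := sum_card_filter_comm G A VM
        _ ≤ ∑ _w ∈ VM, r := by
            apply Finset.sum_le_sum
            intro w hw
            exact hdAr w (hVMA hw)
        _ = VM.card * r := by rw [Finset.sum_const, smul_eq_mul]
        _ = 2 * (m * r) := by rw [hVMcard]; ring
    omega
  -- Step 6 : individual bound for vertices of B
  set c : Fin n → ℕ := fun z => (M.filter fun e => ∀ w ∈ e, G.Adj z w).card with hc
  have hQz : ∀ z ∈ B, dA z + m ≤ A.card + c z := by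
    intro z _
    have hinj2 : (M.filter fun e => ¬ ∀ w ∈ e, G.Adj z w).card ≤ A.card - dA z := by
      have htarget : (A \ (A.filter fun w => G.Adj z w)).card = A.card - dA z := by
        rw [Finset.card_sdiff_of_subset (Finset.filter_subset _ _)]
      rw [← htarget]
      set φ : Sym2 (Fin n) → Fin n := fun e => if G.Adj z (p e) then q e else p e with hφ
      apply Finset.card_le_card_of_injOn φ
      · intro e he
        obtain ⟨heM, hnall⟩ := Finset.mem_filter.mp he
        have hφe : φ e ∈ e ∧ ¬ G.Adj z (φ e) := by
          simp only [hφ]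
          by_cases hzp : G.Adj z (p e)
          · rw [if_pos hzp]
            refine ⟨(hmemiff e (q e)).mpr (Or.inr rfl), ?_⟩
            intro hzq
            apply hnall
            intro w hw
            rcases (hmemiff e w).mp hw with rfl | rfl
            · exact hzp
            · exact hzq
          · rw [if_neg hzp]
            exact ⟨(hmemiff e (p e)).mpr (Or.inl rfl), hzp⟩
        refine Finset.mem_sdiff.mpr ⟨hMA e heM _ hφe.1, ?_⟩
        intro hmem
        exact hφe.2 (Finset.mem_filter.mp hmem).2
      · intro e he f hf hef
        by_contra hne
        have hφe : φ e ∈ e := by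
          simp only [hφ]; by_cases hzp : G.Adj z (p e)
          · rw [if_pos hzp]; exact (hmemiff e (q e)).mpr (Or.inr rfl)
          · rw [if_neg hzp]; exact (hmemiff e (p e)).mpr (Or.inl rfl)
        have hφf : φ f ∈ f := by
          simp only [hφ]; by_cases hzp : G.Adj z (p f)
          · rw [if_pos hzp]; exact (hmemiff f (q f)).mpr (Or.inr rfl)
          · rw [if_neg hzp]; exact (hmemiff f (p f)).mpr (Or.inl rfl)
        exact hdisjedges e (Finset.mem_of_mem_filter e he) f (Finset.mem_of_mem_filter f hf)
          hne (φ e) hφe (hef ▸ hφf)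
    have hsplit : (M.filter fun e => ∀ w ∈ e, G.Adj z w).card
        + (M.filter fun e => ¬ ∀ w ∈ e, G.Adj z w).card = m := by
      rw [← hMcard]
      exact Finset.card_filter_add_card_filter_not (s := M)
        (p := fun e => ∀ w ∈ e, G.Adj z w)
    have hdAa : dA z ≤ A.card := Finset.card_le_card (Finset.filter_subset _ _)
    have hcz : c z = (M.filter fun e => ∀ w ∈ e, G.Adj z w).card := rfl
    omega
  -- Step 7 : sum of c over B
  have hcB : (∑ z ∈ B, c z) ≤ m * (r - 1) := by
    have hswap : (∑ z ∈ B, c z) = ∑ e ∈ M, (B.filter fun z => ∀ w ∈ e, G.Adj z w).card := by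
      have h1 : (∑ z ∈ B, c z) = ∑ z ∈ B, ∑ e ∈ M, if (∀ w ∈ e, G.Adj z w) then 1 else 0 :=
        Finset.sum_congr rfl fun z _ => Finset.card_filter _ _
      have h2 : (∑ e ∈ M, (B.filter fun z => ∀ w ∈ e, G.Adj z w).card)
          = ∑ e ∈ M, ∑ z ∈ B, if (∀ w ∈ e, G.Adj z w) then 1 else 0 :=
        Finset.sum_congr rfl fun e _ => Finset.card_filter _ _
      rw [h1, h2, Finset.sum_comm]
    rw [hswap]
    calc (∑ e ∈ M, (B.filter fun z => ∀ w ∈ e, G.Adj z w).card)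
        ≤ ∑ _e ∈ M, (r - 1) := by
          apply Finset.sum_le_sum
          intro e he
          have hCN := commonNbrs_le G hfree (hadjpq e he)
          have huCN : u ∈ Finset.univ.filter fun z => G.Adj (p e) z ∧ G.Adj (q e) z := by
            refine Finset.mem_filter.mpr ⟨Finset.mem_univ u, ?_, ?_⟩
            · exact ((hA (p e)).mp (hpA e he)).symm
            · exact ((hA (q e)).mp (hqA e he)).symm
          have hsub : (B.filter fun z => ∀ w ∈ e, G.Adj z w) ⊆
              (Finset.univ.filter fun z => G.Adj (p e) z ∧ G.Adj (q e) z).erase u := by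
            intro z hz
            obtain ⟨hzB, hall⟩ := Finset.mem_filter.mp hz
            refine Finset.mem_erase.mpr ⟨((hB z).mp hzB).1, ?_⟩
            refine Finset.mem_filter.mpr ⟨Finset.mem_univ z, ?_, ?_⟩
            · exact (hall (p e) ((hmemiff e (p e)).mpr (Or.inl rfl))).symm
            · exact (hall (q e) ((hmemiff e (q e)).mpr (Or.inr rfl))).symm
          calc (B.filter fun z => ∀ w ∈ e, G.Adj z w).card
              ≤ ((Finset.univ.filter fun z => G.Adj (p e) z ∧ G.Adj (q e) z).erase u).card :=
                Finset.card_le_card hsub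
            _ = (Finset.univ.filter fun z => G.Adj (p e) z ∧ G.Adj (q e) z).card - 1 :=
                Finset.card_erase_of_mem huCN
            _ ≤ r - 1 := by omega
      _ = m * (r - 1) := by rw [Finset.sum_const, smul_eq_mul, hMcard]
  -- Step 6b : Q bound
  have hQ : (∑ v ∈ A, dB v) + m * B.card ≤ B.card * A.card + m * (r - 1) := by
    have hswapQ : (∑ v ∈ A, dB v) = ∑ z ∈ B, dA z := by
      have := sum_card_filter_comm G A B
      exact this
    rw [hswapQ]
    have h1 : (∑ z ∈ B, dA z) + m * B.card ≤ B.card * A.card + (∑ z ∈ B, c z) := by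
      have := Finset.sum_le_sum hQz
      rw [Finset.sum_add_distrib, Finset.sum_const, smul_eq_mul, Finset.sum_add_distrib,
        Finset.sum_const, smul_eq_mul] at this
      calc (∑ z ∈ B, dA z) + m * B.card = (∑ z ∈ B, dA z) + B.card * m := by ring
        _ ≤ B.card * A.card + (∑ z ∈ B, c z) := this
    omega
  -- real-number consolidation
  have hr' : (1:ℝ) ≤ (r:ℝ) := by exact_mod_cast hr
  have hnR : 8*((r:ℝ)^2 + (r:ℝ) + 4) ≤ (n:ℝ) := by exact_mod_cast hn
  have haab : (A.card:ℝ) + (B.card:ℝ) + 1 = (n:ℝ) := by exact_mod_cast hcardn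
  have hmm2 : (2:ℝ) ≤ (m:ℝ) := by exact_mod_cast hm2
  have h2mR : 2*(m:ℝ) ≤ (A.card:ℝ) := by exact_mod_cast h2ma
  have hbb0 : (0:ℝ) ≤ (B.card:ℝ) := Nat.cast_nonneg _
  have haa0 : (0:ℝ) ≤ (A.card:ℝ) := Nat.cast_nonneg _
  have hmain : ρ^2 ≤ (A.card : ℝ) + (A.card : ℝ) * (B.card:ℝ)
      + (m:ℝ) * (5*(r:ℝ) - 1 - (B.card:ℝ)) := by
    have c1 : ((∑ v ∈ A, G.degree v : ℕ) : ℝ)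
        ≤ (A.card : ℝ) + ((∑ v ∈ A, dA v : ℕ):ℝ) + ((∑ v ∈ A, dB v : ℕ):ℝ) := by
      exact_mod_cast hS2
    have c2 : ((∑ v ∈ A, dA v : ℕ) : ℝ) ≤ 4 * ((m:ℝ) * (r:ℝ)) := by exact_mod_cast hP
    have c3 : ((∑ v ∈ A, dB v : ℕ) : ℝ) + (m:ℝ) * (B.card:ℝ)
        ≤ (B.card:ℝ) * (A.card:ℝ) + (m:ℝ)*((r:ℝ)-1) := by
      have h2 := (Nat.cast_le (α := ℝ)).mpr hQ
      push_cast [Nat.cast_sub hr] at h2 ⊢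
      linarith
    have hexp : (m:ℝ)*(5*(r:ℝ)-1-(B.card:ℝ))
        = 4*((m:ℝ)*(r:ℝ)) + (m:ℝ)*((r:ℝ)-1) - (m:ℝ)*(B.card:ℝ) := by ring
    nlinarith [hS1, c1, c2, c3, hexp]
  obtain ⟨H, hH1, hH2, hH3, hH4⟩ := witness_exists r n hr hn48
  have hρH : specRad H ≤ ρ := hmax H hH1 hH2
  have hρnn : (0:ℝ) ≤ ρ := le_trans hH4 hρH
  have hlow : ((n:ℝ) - 3)^2 - 1 ≤ 4*ρ^2 := by
    have := pow_le_pow_left₀ hH4 hρH 2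
    linarith [hH3]
  have hfloor : ((n-1)^2 : ℕ) ≤ 4 * ((n-1)^2/4) + 3 := by omega
  have hfloorR : ((n:ℝ)-1)^2 ≤ 4*((((n - 1) ^ 2 / 4 : ℕ)):ℝ) + 3 := by
    have := (Nat.cast_le (α := ℝ)).mpr hfloor
    push_cast [Nat.cast_sub (by omega : 1 ≤ n)] at this
    linarith
  refine endgame (A.card:ℝ) (B.card:ℝ) (m:ℝ) (r:ℝ) ((n:ℝ)-1) _ ρ hmain (by linarith)
    hmm2 h2mR hr' (by linarith) (by linarith [hfloorR])
    (by calc ((n:ℝ)-1-2)^2 - 1 = ((n:ℝ)-3)^2 - 1 := by ring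
          _ ≤ 4*ρ^2 := hlow) hbb0
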